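/- For any n ≥ 1 and k ≥ 0, the number of permutations π in S_n with pk(π) = k and ipk(π) = 0 is equal to the binomial coefficient C(n, 2k+1). -/

import Mathlib

/-- The one-line notation of a permutation `π` of `{1,…,n}`, read as a function on 0-based
positions: `permWord π j = π_{j+1}` (values are 1-based; out-of-range positions give `0`). -/
def permWord {n : ℕ} (π : Equiv.Perm (Fin n)) (j : ℕ) : ℕ :=
  if h : j < n then ((π ⟨j, h⟩ : Fin n) : ℕ) + 1 else 0

/-- `π` contains `σ` as a consecutive pattern: some window of consecutive letters of `π`
has standardization `σ`, i.e. is order-isomorphic to the one-line word of `σ`. -/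
def ContainsPat {n m : ℕ} (π : Equiv.Perm (Fin n)) (σ : Equiv.Perm (Fin m)) : Prop :=
  ∃ i : ℕ, i + m ≤ n ∧ ∀ j k : Fin m,
    (permWord π (i + (j : ℕ)) < permWord π (i + (k : ℕ)) ↔ permWord σ j < permWord σ k)

/-- The number of peaks of `π`: 1-based indices `i` with `2 ≤ i ≤ n-1` and
`π_{i-1} < π_i > π_{i+1}`. -/
def pkCount {n : ℕ} (π : Equiv.Perm (Fin n)) : ℕ :=
  ((Finset.Icc 2 (n - 1)).filter fun i =>
    permWord π (i - 2) < permWord π (i - 1) ∧ permWord π i < permWord π (i - 1)).card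

/-- The number of left peaks of `π`: 1-based indices `i ∈ [n-1]` that are peaks,
or `i = 1` with `π_1 > π_2`. -/
def lpkCount {n : ℕ} (π : Equiv.Perm (Fin n)) : ℕ :=
  ((Finset.Icc 1 (n - 1)).filter fun i =>
    (2 ≤ i ∧ permWord π (i - 2) < permWord π (i - 1) ∧ permWord π i < permWord π (i - 1))
      ∨ (i = 1 ∧ permWord π 1 < permWord π 0)).card

/-- The number of peaks of `π⁻¹`. -/
def ipk {n : ℕ} (π : Equiv.Perm (Fin n)) : ℕ := pkCount π⁻¹

/-- The number of left peaks of `π⁻¹`. -/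
def ilpk {n : ℕ} (π : Equiv.Perm (Fin n)) : ℕ := lpkCount π⁻¹

/-!
A sequence of distinct values has a consecutive peak as soon as it has indices `a < b < c` with
the value at `b` above those at `a` and `c` (take a maximum on `[a, c]`). Applied to `π⁻¹`, this
shows that `ipk π = 0` iff every letter of `π` is a left-to-right maximum or minimum. Such a `π`
is determined by the boolean word `v` marking its left-to-right minima (`v 0 = true`), and its
peaks are the rises `false, true` of `v`. Extended by `v n = false`, the word `v` is determined by
its set of change points in `{0, …, n - 1}`, which has `2 * pk π + 1` elements, and every subset
of odd size arises.
-/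

open Finset

def changeSet (v : ℕ → Bool) (N : ℕ) : Finset ℕ := {i ∈ range N | v i ≠ v (i + 1)}

def riseSet (v : ℕ → Bool) (N : ℕ) : Finset ℕ :=
  {i ∈ range N | v i = false ∧ v (i + 1) = true}

lemma two_mul_card_riseSet_add (v : ℕ → Bool) (N : ℕ) :
    2 * #(riseSet v N) + (v 0).toNat = #(changeSet v N) + (v N).toNat := by
  induction N with
  | zero => simp [riseSet, changeSet]
  | succ N ih =>
    simp only [riseSet, changeSet, range_add_one, filter_insert] at ih ⊢
    rcases hN : v N <;> rcases hN1 : v (N + 1) <;>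
      simp [hN, hN1, card_insert_of_notMem] at ih ⊢ <;> omega

lemma changeSet_congr {v w : ℕ → Bool} {N : ℕ} (h : ∀ j ≤ N, v j = w j) :
    changeSet v N = changeSet w N := by
  ext i
  simp only [changeSet, mem_filter, mem_range, and_congr_right_iff]
  intro hi
  rw [h i hi.le, h (i + 1) hi]

def parityWord (S : Finset ℕ) (j : ℕ) : Bool := decide (Even #(S ∩ range j))

lemma parityWord_zero (S : Finset ℕ) : parityWord S 0 = true := by simp [parityWord]

lemma parityWord_succ (S : Finset ℕ) (j : ℕ) :
    parityWord S (j + 1) = (parityWord S j ^^ decide (j ∈ S)) := by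
  by_cases h : j ∈ S
  · rw [parityWord, parityWord, range_add_one, inter_insert_of_mem h,
      card_insert_of_notMem (by simp)]
    simp only [Nat.even_add_one, decide_not, h, decide_true, Bool.xor_true]
  · simp [parityWord, range_add_one, inter_insert_of_notMem h, h]

lemma parityWord_of_subset_range {S : Finset ℕ} {N : ℕ} (hS : S ⊆ range N) :
    parityWord S N = decide (Even #S) := by
  rw [parityWord, inter_eq_left.2 hS]

lemma changeSet_parityWord {S : Finset ℕ} {N : ℕ} (hS : S ⊆ range N) :
    changeSet (parityWord S) N = S := by
  ext i
  by_cases h : i ∈ S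
  · simp [changeSet, parityWord_succ, h, mem_range.1 (hS h)]
  · simp [changeSet, parityWord_succ, h]

lemma eq_parityWord_changeSet {v : ℕ → Bool} (hv : v 0 = true) {N j : ℕ} (hj : j ≤ N) :
    v j = parityWord (changeSet v N) j := by
  induction j with
  | zero => rw [hv, parityWord_zero]
  | succ j ih =>
    rw [parityWord_succ, ← ih (by omega)]
    simp only [changeSet, mem_filter, mem_range, show j < N by omega, true_and]
    cases v j <;> cases v (j + 1) <;> simp

lemma exists_consecutive_peak {α : Type*} [LinearOrder α] {f : ℕ → α} {a b c : ℕ}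
    (hab : a < b) (hbc : b < c) (hfab : f a < f b) (hfcb : f c < f b)
    (hf : Set.InjOn f (Set.Icc a c)) :
    ∃ m, a ≤ m ∧ m + 2 ≤ c ∧ f m < f (m + 1) ∧ f (m + 2) < f (m + 1) := by
  obtain ⟨t, ht, hmax⟩ := (Icc a c).exists_max_image f ⟨b, mem_Icc.2 ⟨hab.le, hbc.le⟩⟩
  rw [mem_Icc] at ht
  have hbt := hmax b (mem_Icc.2 ⟨hab.le, hbc.le⟩)
  have hta : t ≠ a := by rintro rfl; exact hfab.not_ge hbt
  have htc : t ≠ c := by rintro rfl; exact hfcb.not_ge hbt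
  have hlt : ∀ s, a ≤ s → s ≤ c → s ≠ t → f s < f t := fun s hs hs' hst =>
    (hmax s (mem_Icc.2 ⟨hs, hs'⟩)).lt_of_ne fun h => hst (hf ⟨hs, hs'⟩ ⟨ht.1, ht.2⟩ h)
  refine ⟨t - 1, by omega, by omega, ?_, ?_⟩
  · rw [show t - 1 + 1 = t by omega]
    exact hlt _ (by omega) (by omega) (by omega)
  · rw [show t - 1 + 1 = t by omega, show t - 1 + 2 = t + 1 by omega]
    exact hlt _ (by omega) (by omega) (by omega)

lemma Equiv.Perm.eq_of_lt_iff_lt {n : ℕ} {π ρ : Equiv.Perm (Fin n)}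
    (h : ∀ i j, π i < π j ↔ ρ i < ρ j) : π = ρ := by
  have hmono : Monotone (ρ * π⁻¹) := fun a b hab => by
    rcases hab.lt_or_eq with hab | rfl
    · refine le_of_lt ((h _ _).1 ?_)
      simpa using hab
    · rfl
  rw [Equiv.Perm.monotone_iff, mul_inv_eq_one] at hmono
  exact hmono.symm

lemma Tuple.sort_inv_lt_sort_inv_iff {n : ℕ} {α : Type*} [LinearOrder α] {f : Fin n → α}
    (hf : Function.Injective f) (i j : Fin n) :
    (Tuple.sort f)⁻¹ i < (Tuple.sort f)⁻¹ j ↔ f i < f j := by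
  have hmono : StrictMono (f ∘ Tuple.sort f) :=
    (Tuple.monotone_sort f).strictMono_of_injective (hf.comp (Tuple.sort f).injective)
  simpa using (hmono.lt_iff_lt (a := (Tuple.sort f)⁻¹ i) (b := (Tuple.sort f)⁻¹ j)).symm

section

variable {n : ℕ}

lemma permWord_lt_permWord_iff (π : Equiv.Perm (Fin n)) {i j : ℕ} (hi : i < n) (hj : j < n) :
    permWord π i < permWord π j ↔ π ⟨i, hi⟩ < π ⟨j, hj⟩ := by
  simp [permWord, hi, hj]

lemma permWord_injOn (π : Equiv.Perm (Fin n)) : Set.InjOn (permWord π) (Set.Iio n) := by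
  intro i hi j hj h
  simp only [Set.mem_Iio] at hi hj
  simpa [permWord, hi, hj, Fin.val_inj] using h

lemma pkCount_eq_zero_iff (π : Equiv.Perm (Fin n)) :
    pkCount π = 0 ↔ ∀ a b c : Fin n, a < b → b < c → ¬(π a < π b ∧ π c < π b) := by
  have hpeak : pkCount π = 0 ↔ ∀ m, m + 2 < n →
      ¬(permWord π m < permWord π (m + 1) ∧ permWord π (m + 2) < permWord π (m + 1)) := by
    rw [pkCount, card_eq_zero, filter_eq_empty_iff]
    constructor
    · intro h m hm
      simpa using h (mem_Icc.2 ⟨le_add_self, by omega⟩ : m + 2 ∈ Icc 2 (n - 1))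
    · intro h i hi
      obtain ⟨m, rfl⟩ : ∃ m, i = m + 2 := ⟨i - 2, by grind⟩
      simpa using h m (by grind)
  rw [hpeak]
  constructor
  · rintro h ⟨a, ha⟩ ⟨b, hb⟩ ⟨c, hc⟩ hab hbc ⟨hba, hcb⟩
    rw [← permWord_lt_permWord_iff] at hba hcb
    obtain ⟨m, -, hmc, hm⟩ := exists_consecutive_peak hab hbc hba hcb
      ((permWord_injOn π).mono fun x hx => lt_of_le_of_lt hx.2 hc)
    exact h m (by omega) hm
  · rintro h m hm ⟨hm1, hm2⟩
    rw [permWord_lt_permWord_iff π (by omega) (by omega)] at hm1 hm2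
    exact h _ _ _ (Fin.mk_lt_mk.2 (Nat.lt_succ_self m)) (Fin.mk_lt_mk.2 (Nat.lt_succ_self _))
      ⟨hm1, hm2⟩

def IsRecordPerm (π : Equiv.Perm (Fin n)) : Prop :=
  ∀ j, (∀ i < j, π i < π j) ∨ (∀ i < j, π j < π i)

lemma ipk_eq_zero_iff (π : Equiv.Perm (Fin n)) : ipk π = 0 ↔ IsRecordPerm π := by
  rw [ipk, pkCount_eq_zero_iff]
  constructor
  · intro h j
    by_contra! hj
    obtain ⟨⟨i, hij, hji⟩, ⟨i', hi'j, hi'⟩⟩ := hj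
    have hji : π j < π i := hji.lt_of_ne (π.injective.ne hij.ne')
    have hi' : π i' < π j := hi'.lt_of_ne (π.injective.ne hi'j.ne)
    exact h (π i') (π j) (π i) hi' hji (by simpa using And.intro hi'j hij)
  · rintro h a b c hab hbc ⟨hba, hcb⟩
    rcases h (π⁻¹ b) with hb | hb
    · exact hbc.not_gt (by simpa using hb _ hcb)
    · exact hab.not_gt (by simpa using hb _ hba)

def leftMinWord (π : Equiv.Perm (Fin n)) (j : ℕ) : Bool :=
  if h : j < n then decide (∀ i < (⟨j, h⟩ : Fin n), π ⟨j, h⟩ < π i) else false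

lemma leftMinWord_coe (π : Equiv.Perm (Fin n)) (j : Fin n) :
    leftMinWord π j = decide (∀ i < j, π j < π i) := by
  simp [leftMinWord]

lemma leftMinWord_zero (π : Equiv.Perm (Fin n)) (hn : 0 < n) : leftMinWord π 0 = true := by
  simp only [leftMinWord, dif_pos hn, decide_eq_true_eq]
  exact fun i hi => (Nat.not_lt_zero _ hi).elim

lemma leftMinWord_of_le (π : Equiv.Perm (Fin n)) {j : ℕ} (hj : n ≤ j) :
    leftMinWord π j = false := by
  simp [leftMinWord, hj.not_gt]

lemma IsRecordPerm.lt_iff_leftMinWord_eq_false {π : Equiv.Perm (Fin n)} (hπ : IsRecordPerm π)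
    {i j : Fin n} (hij : i < j) : π i < π j ↔ leftMinWord π j = false := by
  rw [leftMinWord_coe]
  rcases hπ j with h | h
  · simpa [h i hij] using ⟨i, hij, (h i hij).le⟩
  · simpa [(h i hij).not_gt] using h

lemma IsRecordPerm.permWord_lt_iff {π : Equiv.Perm (Fin n)} (hπ : IsRecordPerm π)
    {i j : ℕ} (hij : i < j) (hj : j < n) :
    permWord π i < permWord π j ↔ leftMinWord π j = false := by
  rw [permWord_lt_permWord_iff π (hij.trans hj) hj]
  exact hπ.lt_iff_leftMinWord_eq_false (Fin.mk_lt_mk.2 hij)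

lemma IsRecordPerm.permWord_gt_iff {π : Equiv.Perm (Fin n)} (hπ : IsRecordPerm π)
    {i j : ℕ} (hij : i < j) (hj : j < n) :
    permWord π j < permWord π i ↔ leftMinWord π j = true := by
  have hne : permWord π j ≠ permWord π i := fun h =>
    hij.ne' (permWord_injOn π (Set.mem_Iio.2 hj) (Set.mem_Iio.2 (hij.trans hj)) h)
  rw [← hne.le_iff_lt, ← not_lt, hπ.permWord_lt_iff hij hj, Bool.not_eq_false]

lemma IsRecordPerm.pkCount_eq {π : Equiv.Perm (Fin n)} (hπ : IsRecordPerm π) (hn : 0 < n) :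
    pkCount π = #(riseSet (leftMinWord π) n) := by
  refine card_nbij' (· - 1) (· + 1) ?_ ?_ ?_ ?_
  · intro i hi
    simp only [mem_coe, mem_Icc, mem_filter] at hi
    obtain ⟨⟨hi2, hin⟩, hup, hdown⟩ := hi
    rw [hπ.permWord_lt_iff (by omega) (by omega)] at hup
    rw [hπ.permWord_gt_iff (by omega) (by omega)] at hdown
    simp only [riseSet, mem_coe, mem_range, mem_filter]
    exact ⟨by omega, hup, by rwa [Nat.sub_add_cancel (by omega)]⟩
  · intro p hp
    simp only [riseSet, mem_coe, mem_range, mem_filter] at hp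
    obtain ⟨hpn, hlow, hhigh⟩ := hp
    have hp0 : p ≠ 0 := by rintro rfl; simp [leftMinWord_zero π hn] at hlow
    have hp1 : p + 1 < n := by
      by_contra! h
      simp [leftMinWord_of_le π h] at hhigh
    simp only [mem_coe, mem_Icc, mem_filter, Nat.add_sub_cancel]
    refine ⟨⟨by omega, by omega⟩, ?_, ?_⟩
    · rwa [show p + 1 - 2 = p - 1 by omega, hπ.permWord_lt_iff (by omega) (by omega)]
    · rwa [hπ.permWord_gt_iff (by omega) hp1]
  · intro i hi
    simp only [mem_coe, mem_Icc, mem_filter] at hi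
    exact Nat.sub_add_cancel (by omega)
  · intro p _
    exact Nat.add_sub_cancel p 1

lemma IsRecordPerm.card_changeSet_leftMinWord {π : Equiv.Perm (Fin n)} (hπ : IsRecordPerm π)
    (hn : 0 < n) : #(changeSet (leftMinWord π) n) = 2 * pkCount π + 1 := by
  have h := two_mul_card_riseSet_add (leftMinWord π) n
  rw [leftMinWord_zero π hn, leftMinWord_of_le π le_rfl, ← hπ.pkCount_eq hn] at h
  simpa using h.symm

/-- Marked positions come first, in decreasing order of position, then the unmarked ones in
increasing order: sorting by this key gives the record permutation with left-to-right minima `v`. -/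
def recordKey (v : ℕ → Bool) (j : ℕ) : ℤ := if v j then -j - 1 else j

lemma recordKey_injective (v : ℕ → Bool) : Function.Injective (recordKey v) := by
  intro i j h
  unfold recordKey at h
  split_ifs at h <;> omega

lemma recordKey_lt_recordKey_iff (v : ℕ → Bool) {i j : ℕ} (hij : i < j) :
    recordKey v i < recordKey v j ↔ v j = false := by
  unfold recordKey
  split_ifs <;> simp_all <;> omega

lemma IsRecordPerm.lt_iff_recordKey_lt {π : Equiv.Perm (Fin n)} (hπ : IsRecordPerm π)
    (i j : Fin n) :
    π i < π j ↔ recordKey (leftMinWord π) i < recordKey (leftMinWord π) j := by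
  have hlt : ∀ {i j : Fin n}, i < j →
      (π i < π j ↔ recordKey (leftMinWord π) i < recordKey (leftMinWord π) j) := fun hij => by
    rw [hπ.lt_iff_leftMinWord_eq_false hij, recordKey_lt_recordKey_iff _ hij]
  rcases lt_trichotomy i j with hij | rfl | hji
  · exact hlt hij
  · simp
  · have hπne : π j ≠ π i := π.injective.ne hji.ne
    have hkne : recordKey (leftMinWord π) j ≠ recordKey (leftMinWord π) i :=
      (recordKey_injective _).ne (Fin.val_injective.ne hji.ne)
    rw [← not_iff_not, not_lt, not_lt, hπne.le_iff_lt, hkne.le_iff_lt, hlt hji]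

def recordPerm (n : ℕ) (v : ℕ → Bool) : Equiv.Perm (Fin n) :=
  (Tuple.sort fun j : Fin n => recordKey v j)⁻¹

lemma recordPerm_lt_iff (v : ℕ → Bool) (i j : Fin n) :
    recordPerm n v i < recordPerm n v j ↔ recordKey v i < recordKey v j :=
  Tuple.sort_inv_lt_sort_inv_iff ((recordKey_injective v).comp Fin.val_injective) i j

lemma recordPerm_congr {v w : ℕ → Bool} (h : ∀ j < n, v j = w j) :
    recordPerm n v = recordPerm n w := by
  unfold recordPerm
  congr 2
  funext j
  simp only [recordKey, h j j.isLt]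

lemma isRecordPerm_recordPerm (v : ℕ → Bool) : IsRecordPerm (recordPerm n v) := by
  intro j
  simp only [recordPerm_lt_iff]
  cases hj : v j
  · exact Or.inl fun i hij => (recordKey_lt_recordKey_iff v hij).2 hj
  · refine Or.inr fun i hij => ?_
    rcases lt_or_gt_of_ne ((recordKey_injective v).ne (Fin.val_injective.ne hij.ne')) with h | h
    · exact h
    · simp [(recordKey_lt_recordKey_iff v hij).1 h] at hj

lemma leftMinWord_recordPerm {v : ℕ → Bool} (hv : v 0 = true) {j : ℕ} (hj : j < n) :
    leftMinWord (recordPerm n v) j = v j := by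
  rcases Nat.eq_zero_or_pos j with rfl | hj0
  · rw [leftMinWord_zero _ hj, hv]
  · have h := (isRecordPerm_recordPerm v).lt_iff_leftMinWord_eq_false
      (Fin.mk_lt_mk.2 hj0 : (⟨0, by omega⟩ : Fin n) < ⟨j, hj⟩)
    rw [recordPerm_lt_iff, recordKey_lt_recordKey_iff v hj0] at h
    revert h
    cases leftMinWord (recordPerm n v) j <;> cases v j <;> simp

lemma IsRecordPerm.eq_recordPerm {π : Equiv.Perm (Fin n)} (hπ : IsRecordPerm π) :
    π = recordPerm n (leftMinWord π) :=
  Equiv.Perm.eq_of_lt_iff_lt fun i j => by rw [hπ.lt_iff_recordKey_lt, recordPerm_lt_iff]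

lemma IsRecordPerm.eq_of_changeSet_leftMinWord_eq {π ρ : Equiv.Perm (Fin n)} (hn : 0 < n)
    (hπ : IsRecordPerm π) (hρ : IsRecordPerm ρ)
    (h : changeSet (leftMinWord π) n = changeSet (leftMinWord ρ) n) : π = ρ :=
  calc π = recordPerm n (leftMinWord π) := hπ.eq_recordPerm
    _ = recordPerm n (leftMinWord ρ) := recordPerm_congr fun j hj => by
      rw [eq_parityWord_changeSet (leftMinWord_zero π hn) hj.le,
        eq_parityWord_changeSet (leftMinWord_zero ρ hn) hj.le, h]
    _ = ρ := hρ.eq_recordPerm.symm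

lemma exists_isRecordPerm_changeSet_leftMinWord_eq {S : Finset ℕ} (hS : S ⊆ range n)
    (hodd : Odd #S) :
    ∃ π : Equiv.Perm (Fin n), IsRecordPerm π ∧ changeSet (leftMinWord π) n = S := by
  refine ⟨recordPerm n (parityWord S), isRecordPerm_recordPerm _,
    (changeSet_congr fun j hj => ?_).trans (changeSet_parityWord hS)⟩
  rcases hj.lt_or_eq with hj | rfl
  · exact leftMinWord_recordPerm (parityWord_zero S) hj
  · rw [leftMinWord_of_le _ le_rfl, parityWord_of_subset_range hS]
    simpa using hodd

end

/-- For any `n ≥ 1` and `k ≥ 0`, the number of permutations `π ∈ S_n` with `pk(π) = k`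
whose inverse has no peaks is the binomial coefficient `C(n, 2k+1)`. -/
theorem stmt7 (n k : ℕ) (hn : 1 ≤ n) :
    Nat.card {π : Equiv.Perm (Fin n) // pkCount π = k ∧ ipk π = 0}
      = Nat.choose n (2 * k + 1) := by
  have hmem (π : {π : Equiv.Perm (Fin n) // pkCount π = k ∧ ipk π = 0}) :
      changeSet (leftMinWord π.1) n ∈ powersetCard (2 * k + 1) (range n) := by
    rw [mem_powersetCard, ((ipk_eq_zero_iff _).1 π.2.2).card_changeSet_leftMinWord hn, π.2.1]
    exact ⟨filter_subset _ _, rfl⟩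
  rw [show n.choose (2 * k + 1) = Nat.card (powersetCard (2 * k + 1) (range n)) by
    rw [Nat.card_eq_finsetCard, card_powersetCard, card_range]]
  refine Nat.card_eq_of_bijective (fun π => ⟨_, hmem π⟩) ⟨?_, ?_⟩
  · intro π ρ h
    exact Subtype.ext (((ipk_eq_zero_iff _).1 π.2.2).eq_of_changeSet_leftMinWord_eq hn
      ((ipk_eq_zero_iff _).1 ρ.2.2) (congrArg Subtype.val h))
  · rintro ⟨S, hS⟩
    rw [mem_powersetCard] at hS
    obtain ⟨π, hπ, hπS⟩ := exists_isRecordPerm_changeSet_leftMinWord_eq hS.1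
      (by rw [hS.2]; exact odd_two_mul_add_one k)
    have hpk : pkCount π = k := by
      have h := hπ.card_changeSet_leftMinWord hn
      rw [hπS, hS.2] at h
      omega
    exact ⟨⟨π, hpk, (ipk_eq_zero_iff π).2 hπ⟩, Subtype.ext hπS⟩
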